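/- arXiv:1107.1844 — 6 statements merged into one kernel-verified Lean document; each statement's English description precedes it below -/
import Mathlib

section
/- Every strongly connected tournament on at least 3 vertices contains a directed Hamilton cycle. -/
/-!
A strongly connected tournament contains a directed triangle: given an edge `u → v`, a path
from `v` back to `u` has an edge `b → c` leaving the set `{v} ∪ N⁺(u)`, and then
`u → b → c → u`.

A directed cycle `C` missing some vertex can be enlarged (Camion). If some outside vertex `w` has
edges `x → w → x⁺` along `C`, insert it. Otherwise every outside vertex beats all of `C` or loses
to all of `C`, since an edge `x → w` forces `x⁺ → w`. By strong connectivity an edge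
leaves `C`, necessarily into a vertex `a` with `C → a`, and a path from `a` back to `C` contains
an edge `a' → b` with `C → a'` and `b → C`; then `x → a' → b → x⁺` enlarges `C` by two vertices.
-/

open Equiv Finset

theorem Relation.ReflTransGen.exists_edge_leaving {α : Type*} {r : α → α → Prop}
    {p : α → Prop} {a b : α} (h : Relation.ReflTransGen r a b) (ha : p a) (hb : ¬ p b) :
    ∃ x y, r x y ∧ p x ∧ ¬ p y := by
  induction h with
  | refl => exact absurd ha hb
  | @tail c d _ hcd ih =>
    by_cases hc : p c
    · exact ⟨c, d, hcd, hc, hb⟩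
    · exact ih hc

namespace Equiv.Perm

variable {α : Type*} {σ : Perm α} {x u : α}

theorem apply_ne_of_apply_eq_self (hx : σ x ≠ x) (hu : σ u = u) : σ x ≠ u := fun h =>
  hx (by rw [σ.injective (h.trans hu.symm), hu])

variable [DecidableEq α]

theorem mul_swap_apply_of_ne {y : α} (hx : y ≠ x) (hu : y ≠ u) : (σ * swap x u) y = σ y := by
  rw [mul_apply, swap_apply_of_ne_of_ne hx hu]

theorem IsCycle.mul_swap [Finite α] (hσ : σ.IsCycle) (hx : σ x ≠ x) (hu : σ u = u) :
    (σ * swap x u).IsCycle := by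
  have hτx : (σ * swap x u) x = u := by simp [hu]
  have step : ∀ y, σ y ≠ y → (σ * swap x u).SameCycle y (σ y) := by
    intro y hy
    by_cases hyx : y = x
    · subst hyx
      exact ⟨2, by rw [zpow_two, mul_apply, hτx]; simp⟩
    · exact ⟨1, by rw [zpow_one, mul_swap_apply_of_ne hyx fun h => hy (h ▸ hu)]⟩
  have reach : ∀ k : ℕ, (σ * swap x u).SameCycle x ((σ ^ k) x) := by
    intro k
    induction k with
    | zero => rfl
    | succ k ih =>
      rw [pow_succ', mul_apply]
      exact ih.trans (step _ (by rwa [Ne, apply_pow_apply_eq_iff]))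
  refine ⟨x, by rw [hτx]; exact fun h => hx (h ▸ hu), fun y hy => ?_⟩
  by_cases hyu : y = u
  · exact ⟨1, by rw [zpow_one, hτx, hyu]⟩
  · have hσy : σ y ≠ y := by
      by_cases hyx : y = x
      · rwa [hyx]
      · rwa [mul_swap_apply_of_ne hyx hyu] at hy
    obtain ⟨k, rfl⟩ := hσ.exists_pow_eq hx hσy
    exact reach k

theorem card_support_lt_card_support_mul_swap [Fintype α] (hx : σ x ≠ x) (hu : σ u = u) :
    #σ.support < #(σ * swap x u).support := by
  have hτu : (σ * swap x u) u = σ x := by simp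
  have hundo : swap u ((σ * swap x u) u) * (σ * swap x u) = σ := by
    rw [hτu, mul_swap_eq_swap_mul, hu, swap_comm, swap_mul_self_mul]
  simpa only [hundo] using
    card_support_swap_mul (hτu.trans_ne (apply_ne_of_apply_eq_self hx hu))

theorem IsCycle.exists_bijective_zmod [Fintype α] (hσ : σ.IsCycle) (hs : σ.support = univ) :
    ∃ c : ZMod (Fintype.card α) → α, Function.Bijective c ∧ ∀ i, c (i + 1) = σ (c i) := by
  have hn : orderOf σ = Fintype.card α := by rw [hσ.orderOf, hs, card_univ]
  have : NeZero (Fintype.card α) := ⟨hn ▸ (orderOf_pos σ).ne'⟩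
  obtain ⟨x, hx, -⟩ := id hσ
  refine ⟨fun i => (σ ^ i.val) x, ?_, fun i => ?_⟩
  · refine (Fintype.bijective_iff_surjective_and_card _).2 ⟨fun y => ?_, ZMod.card _⟩
    obtain ⟨k, rfl⟩ := hσ.exists_pow_eq hx (mem_support.1 (hs ▸ mem_univ y))
    refine ⟨k, ?_⟩
    simp only [ZMod.val_natCast, ← hn, pow_mod_orderOf]
  · rw [← mul_apply, ← pow_succ']
    refine congrArg (fun g : Perm α => g x) ?_
    rw [pow_inj_mod, hn, ← ZMod.natCast_eq_natCast_iff']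
    simp

end Equiv.Perm

section

variable {V : Type*} {E : V → V → Prop}

structure IsTournament (E : V → V → Prop) : Prop where
  asymm : ∀ ⦃u v⦄, E u v → ¬ E v u
  total : ∀ ⦃u v⦄, u ≠ v → E u v ∨ E v u

namespace IsTournament

variable {u v : V}

theorem irrefl (hE : IsTournament E) (v : V) : ¬ E v v := fun h => hE.asymm h h

theorem ne (hE : IsTournament E) (h : E u v) : u ≠ v := by
  rintro rfl
  exact hE.irrefl u h

theorem of_not (hE : IsTournament E) (hne : u ≠ v) (h : ¬ E u v) : E v u :=
  (hE.total hne).resolve_left h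

end IsTournament

/-- A directed cycle of `E`, encoded as the cyclic permutation sending each of its vertices to
its successor and fixing all other vertices; appending `u` after `x` is then right multiplication
by `swap x u`. -/
structure IsDirectedCycle (E : V → V → Prop) (σ : Perm V) : Prop where
  isCycle : σ.IsCycle
  rel : ∀ x, σ x ≠ x → E x (σ x)

/-- A directed path of `E` from `a` to `b`, encoded as the cyclic permutation of its vertices
following the path and returning from `b` to `a`. -/
structure IsDirectedPath (E : V → V → Prop) (σ : Perm V) (a b : V) : Prop where
  isCycle : σ.IsCycle
  apply_last : σ b = a
  ne : a ≠ b
  rel : ∀ x, σ x ≠ x → x ≠ b → E x (σ x)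

variable {σ : Perm V} {a b x y z u v : V}

theorem IsDirectedPath.apply_last_ne (h : IsDirectedPath E σ a b) : σ b ≠ b :=
  h.apply_last ▸ h.ne

theorem IsDirectedCycle.isDirectedPath (h : IsDirectedCycle E σ) (hx : σ x ≠ x) :
    IsDirectedPath E σ (σ x) x :=
  ⟨h.isCycle, rfl, hx, fun y hy _ => h.rel y hy⟩

theorem IsTournament.forall_rel_or_forall_rel_of_isDirectedCycle [Finite V]
    (hE : IsTournament E) (hσ : IsDirectedCycle E σ) (hv : σ v = v)
    (hins : ∀ x, σ x ≠ x → E x v → ¬ E v (σ x)) :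
    (∀ x, σ x ≠ x → E x v) ∨ (∀ x, σ x ≠ x → E v x) := by
  by_cases h : ∃ x₀, σ x₀ ≠ x₀ ∧ E x₀ v
  · obtain ⟨x₀, hx₀, hx₀v⟩ := h
    have hpow : ∀ k : ℕ, E ((σ ^ k) x₀) v := by
      intro k
      induction k with
      | zero => exact hx₀v
      | succ k ih =>
        have hy : σ ((σ ^ k) x₀) ≠ (σ ^ k) x₀ := by rwa [Ne, Perm.apply_pow_apply_eq_iff]
        rw [pow_succ', Perm.mul_apply]
        exact hE.of_not (Perm.apply_ne_of_apply_eq_self hy hv).symm (hins _ hy ih)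
    left
    intro x hx
    obtain ⟨k, rfl⟩ := hσ.isCycle.exists_pow_eq hx₀ hx
    exact hpow k
  · push Not at h
    exact Or.inr fun x hx => hE.of_not (fun h => hx (h ▸ hv)) (h x hx)

variable [DecidableEq V]

theorem isDirectedPath_swap (hne : x ≠ y) (h : E x y) : IsDirectedPath E (swap x y) x y where
  isCycle := Perm.isCycle_swap hne
  apply_last := swap_apply_right x y
  ne := hne
  rel z hz hzy := by
    obtain rfl : z = x := by_contra fun hzx => hz (swap_apply_of_ne_of_ne hzx hzy)
    rwa [swap_apply_left]

theorem IsDirectedPath.mul_swap [Finite V] (h : IsDirectedPath E σ a b) (hu : σ u = u)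
    (hbu : E b u) : IsDirectedPath E (σ * swap b u) a u where
  isCycle := h.isCycle.mul_swap h.apply_last_ne hu
  apply_last := by simp [h.apply_last]
  ne := h.apply_last ▸ Perm.apply_ne_of_apply_eq_self h.apply_last_ne hu
  rel x hx hxu := by
    by_cases hxb : x = b
    · subst hxb
      simpa [hu] using hbu
    · rw [Perm.mul_swap_apply_of_ne hxb hxu] at hx ⊢
      exact h.rel x hx hxb

theorem IsDirectedPath.isDirectedCycle (h : IsDirectedPath E σ a b) (hba : E b a) :
    IsDirectedCycle E σ where
  isCycle := h.isCycle
  rel x hx := by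
    by_cases hxb : x = b
    · rwa [hxb, h.apply_last]
    · exact h.rel x hx hxb

namespace IsTournament

theorem isDirectedCycle_of_triangle [Finite V] (hE : IsTournament E) (hxy : E x y)
    (hyz : E y z) (hzx : E z x) : IsDirectedCycle E (swap x y * swap y z) := by
  have hzx' : z ≠ x := by
    rintro rfl
    exact hE.asymm hyz hxy
  have hz : swap x y z = z := swap_apply_of_ne_of_ne hzx' (hE.ne hyz).symm
  exact ((isDirectedPath_swap (hE.ne hxy) hxy).mul_swap hz hyz).isDirectedCycle hzx

theorem exists_isDirectedCycle [Finite V] [Nontrivial V] (hE : IsTournament E)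
    (hstrong : ∀ u v : V, Relation.ReflTransGen E u v) : ∃ σ, IsDirectedCycle E σ := by
  obtain ⟨u, v, huv⟩ : ∃ u v, E u v := by
    obtain ⟨u, v, hne⟩ := exists_pair_ne V
    exact (hE.total hne).elim (fun h => ⟨u, v, h⟩) (fun h => ⟨v, u, h⟩)
  obtain ⟨b, c, hbc, hb, hc⟩ := (hstrong v u).exists_edge_leaving (p := fun w => w = v ∨ E u w)
    (Or.inl rfl) (by rintro (h | h); exacts [hE.ne huv h, hE.irrefl u h])
  have hub : E u b := hb.elim (fun h => h ▸ huv) id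
  have huc : u ≠ c := by
    rintro rfl
    exact hE.asymm hub hbc
  exact ⟨_, hE.isDirectedCycle_of_triangle hub hbc (hE.of_not huc fun h => hc (Or.inr h))⟩

theorem exists_isDirectedCycle_card_support_lt [Fintype V] (hE : IsTournament E)
    (hstrong : ∀ u v : V, Relation.ReflTransGen E u v) (hσ : IsDirectedCycle E σ)
    (hv : σ v = v) : ∃ τ, IsDirectedCycle E τ ∧ #σ.support < #τ.support := by
  by_cases hins : ∃ x u, σ x ≠ x ∧ σ u = u ∧ E x u ∧ E u (σ x)
  · obtain ⟨x, u, hx, hu, hxu, hux⟩ := hins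
    refine ⟨_, ?_, Perm.card_support_lt_card_support_mul_swap hx hu⟩
    exact ((hσ.isDirectedPath hx).mul_swap hu hxu).isDirectedCycle hux
  push Not at hins
  have hdich := fun u (hu : σ u = u) =>
    hE.forall_rel_or_forall_rel_of_isDirectedCycle hσ hu fun x hx => hins x u hx hu
  obtain ⟨x₀, hx₀, -⟩ := id hσ.isCycle
  obtain ⟨x, a, hxa, hx, ha⟩ :=
    (hstrong x₀ v).exists_edge_leaving (p := fun w => σ w ≠ w) hx₀ (not_not.2 hv)
  rw [not_not] at ha
  have haA : ∀ y, σ y ≠ y → E y a := (hdich a ha).resolve_right fun h => hE.asymm hxa (h x hx)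
  obtain ⟨a', b, ha'b, ⟨ha', ha'A⟩, hb⟩ := (hstrong a x₀).exists_edge_leaving
    (p := fun w => σ w = w ∧ ∀ y, σ y ≠ y → E y w) ⟨ha, haA⟩ fun h => hx₀ h.1
  have hbfix : σ b = b := by
    by_contra hbm
    exact hE.asymm ha'b (ha'A b hbm)
  have hbB : ∀ y, σ y ≠ y → E b y := (hdich b hbfix).resolve_left fun h => hb ⟨hbfix, h⟩
  have hp := (hσ.isDirectedPath hx₀).mul_swap ha' (ha'A x₀ hx₀)
  have hb' : (σ * swap x₀ a') b = b := by
    rwa [Perm.mul_swap_apply_of_ne (fun h => hx₀ (by rwa [← h])) (hE.ne ha'b).symm]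
  refine ⟨_, (hp.mul_swap hb' ha'b).isDirectedCycle (hbB _ ?_), ?_⟩
  · exact fun h => hx₀ (σ.injective h)
  · exact (Perm.card_support_lt_card_support_mul_swap hx₀ ha').trans
      (Perm.card_support_lt_card_support_mul_swap hp.apply_last_ne hb')

theorem exists_isDirectedCycle_support_eq_univ [Fintype V] [Nontrivial V]
    (hE : IsTournament E) (hstrong : ∀ u v : V, Relation.ReflTransGen E u v) :
    ∃ σ, IsDirectedCycle E σ ∧ σ.support = univ := by
  classical
  obtain ⟨σ₀, hσ₀⟩ := hE.exists_isDirectedCycle hstrong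
  obtain ⟨σ, hσ, hmax⟩ := (univ.filter (IsDirectedCycle E)).exists_max_image
    (fun σ => #σ.support) ⟨σ₀, by simpa using hσ₀⟩
  simp only [mem_filter, mem_univ, true_and] at hσ hmax
  refine ⟨σ, hσ, eq_univ_of_forall fun v => Perm.mem_support.2 fun hv => ?_⟩
  obtain ⟨τ, hτ, hlt⟩ := hE.exists_isDirectedCycle_card_support_lt hstrong hσ hv
  exact (hmax τ hτ).not_gt hlt

end IsTournament

end

/-- Every strongly connected tournament on at least 3 vertices contains a directed
Hamilton cycle. -/
theorem stmt1 {V : Type*} [Fintype V] (E : V → V → Prop)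
    (htour : (∀ v, ¬ E v v) ∧ ∀ u v : V, u ≠ v → (E u v ↔ ¬ E v u))
    (hcard : 3 ≤ Fintype.card V)
    (hstrong : ∀ u v : V, Relation.ReflTransGen E u v) :
    ∃ c : ZMod (Fintype.card V) → V, Function.Bijective c ∧
      ∀ i : ZMod (Fintype.card V), E (c i) (c (i + 1)) := by
  classical
  obtain ⟨hirr, htot⟩ := htour
  have hE : IsTournament E :=
    ⟨fun u v huv => (htot u v fun h => hirr u (h ▸ huv)).1 huv,
      fun u v hne => or_iff_not_imp_left.2 (htot v u hne.symm).2⟩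
  have : Nontrivial V := Fintype.one_lt_card_iff_nontrivial.1 (by omega)
  obtain ⟨σ, hσ, hsupp⟩ := hE.exists_isDirectedCycle_support_eq_univ hstrong
  obtain ⟨c, hc, hsucc⟩ := hσ.isCycle.exists_bijective_zmod hsupp
  refine ⟨c, hc, fun i => hsucc i ▸ hσ.rel (c i) ?_⟩
  exact Perm.mem_support.1 (hsupp ▸ mem_univ (c i))
end

section
/- Let k ≥ 3 and r ≥ 0 be integers. If a tournament contains a directed cycle of length k + (k-2)·r, then it contains a directed cycle of length exactly k. -/
lemma stmt4_step {V : Type*} (E : V → V → Prop)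
    (htour : (∀ v, ¬ E v v) ∧ ∀ u v : V, u ≠ v → (E u v ↔ ¬ E v u))
    (n m k : ℕ) (hk : 3 ≤ k) (hkm : k ≤ m) (hnm : n = m + (k - 2))
    (hcyc : ∃ c : ZMod n → V, Function.Injective c ∧ ∀ i, E (c i) (c (i + 1))) :
    (∃ c : ZMod m → V, Function.Injective c ∧ ∀ i, E (c i) (c (i + 1))) ∨
    (∃ c : ZMod k → V, Function.Injective c ∧ ∀ i, E (c i) (c (i + 1))) := by
  obtain ⟨c, hinj, hedge⟩ := hcyc
  haveI : NeZero n := ⟨by omega⟩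
  haveI : NeZero m := ⟨by omega⟩
  haveI : NeZero k := ⟨by omega⟩
  have hmn : m < n := by omega
  have hkn : k ≤ n := by omega
  have hcast : ∀ a b : ℕ, a < n → b < n → ((a : ZMod n) = (b : ZMod n)) → a = b := by
    intro a b ha hb h
    have := congrArg ZMod.val h
    rwa [ZMod.val_cast_of_lt ha, ZMod.val_cast_of_lt hb] at this
  have hone : (1 : ZMod m).val = 1 := by
    have : (1 : ZMod m) = ((1 : ℕ) : ZMod m) := by norm_num
    rw [this, ZMod.val_natCast, Nat.mod_eq_of_lt (by omega)]
  have honek : (1 : ZMod k).val = 1 := by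
    have : (1 : ZMod k) = ((1 : ℕ) : ZMod k) := by norm_num
    rw [this, ZMod.val_natCast, Nat.mod_eq_of_lt (by omega)]
  have hne : c 0 ≠ c (((k - 1 : ℕ) : ZMod n)) := by
    intro h
    have h0 : ((0 : ℕ) : ZMod n) = ((k - 1 : ℕ) : ZMod n) := by
      have := hinj h
      simpa using this
    have := hcast 0 (k - 1) (by omega) (by omega) h0
    omega
  by_cases hE : E (c (((k - 1 : ℕ) : ZMod n))) (c 0)
  · -- backward chord: direct k-cycle c 0, c 1, ..., c (k-1)
    right
    refine ⟨fun i => c ((i.val : ℕ) : ZMod n), ?_, ?_⟩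
    · intro i j h
      dsimp only at h
      have h2 := hcast i.val j.val (lt_of_lt_of_le (ZMod.val_lt i) hkn)
        (lt_of_lt_of_le (ZMod.val_lt j) hkn) (hinj h)
      exact ZMod.val_injective k h2
    · intro i
      dsimp only
      have hi : i.val < k := ZMod.val_lt i
      have h1 : (i + 1).val = (i.val + 1) % k := by
        rw [ZMod.val_add, honek]
      by_cases hlast : i.val + 1 < k
      · have h2 : (i + 1).val = i.val + 1 := by rw [h1, Nat.mod_eq_of_lt hlast]
        rw [h2]
        have := hedge ((i.val : ℕ) : ZMod n)
        have hc : ((i.val + 1 : ℕ) : ZMod n) = ((i.val : ℕ) : ZMod n) + 1 := by push_cast; ring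
        rwa [hc]
      · have hiv : i.val = k - 1 := by omega
        have h2 : (i + 1).val = 0 := by
          rw [h1, hiv]
          have : k - 1 + 1 = k := by omega
          rw [this, Nat.mod_self]
        rw [h2, hiv]
        simpa using hE
  · -- forward chord: shortcut to a cycle of length m
    have hE' : E (c 0) (c (((k - 1 : ℕ) : ZMod n))) :=
      (htour.2 _ _ hne).mpr hE
    left
    refine ⟨fun i : ZMod m =>
      c (if i.val = 0 then (0 : ZMod n) else ((i.val + (k - 2) : ℕ) : ZMod n)), ?_, ?_⟩
    · intro i j h
      dsimp only at h
      have h2 := hinj h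
      have hi : i.val < m := ZMod.val_lt i
      have hj : j.val < m := ZMod.val_lt j
      apply ZMod.val_injective m
      by_cases hi0 : i.val = 0 <;> by_cases hj0 : j.val = 0
      · omega
      · rw [if_pos hi0, if_neg hj0] at h2
        have h0 : ((0 : ℕ) : ZMod n) = ((j.val + (k - 2) : ℕ) : ZMod n) := by simpa using h2
        have := hcast 0 (j.val + (k - 2)) (by omega) (by omega) h0
        omega
      · rw [if_neg hi0, if_pos hj0] at h2
        have h0 : ((i.val + (k - 2) : ℕ) : ZMod n) = ((0 : ℕ) : ZMod n) := by simpa using h2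
        have := hcast (i.val + (k - 2)) 0 (by omega) (by omega) h0
        omega
      · rw [if_neg hi0, if_neg hj0] at h2
        have := hcast (i.val + (k - 2)) (j.val + (k - 2)) (by omega) (by omega) h2
        omega
    · intro i
      dsimp only
      have hi : i.val < m := ZMod.val_lt i
      have h1 : (i + 1).val = (i.val + 1) % m := by
        rw [ZMod.val_add, hone]
      by_cases hi0 : i.val = 0
      · -- the chord edge
        have h2 : (i + 1).val = 1 := by
          rw [h1, hi0, Nat.mod_eq_of_lt (by omega)]
        rw [hi0, h2, if_pos rfl, if_neg (by omega)]
        have : (1 + (k - 2) : ℕ) = k - 1 := by omega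
        rw [this]
        exact hE'
      · by_cases hlast : i.val + 1 < m
        · have h2 : (i + 1).val = i.val + 1 := by rw [h1, Nat.mod_eq_of_lt hlast]
          rw [h2, if_neg hi0, if_neg (by omega)]
          have := hedge ((i.val + (k - 2) : ℕ) : ZMod n)
          have hc : ((i.val + 1 + (k - 2) : ℕ) : ZMod n)
              = ((i.val + (k - 2) : ℕ) : ZMod n) + 1 := by push_cast; ring
          rwa [hc]
        · -- wrap-around edge
          have hiv : i.val = m - 1 := by omega
          have h2 : (i + 1).val = 0 := by
            rw [h1, hiv]
            have : m - 1 + 1 = m := by omega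
            rw [this, Nat.mod_self]
          rw [h2, if_neg hi0, if_pos rfl, hiv]
          have hlasteq : (m - 1 + (k - 2) : ℕ) = n - 1 := by omega
          rw [hlasteq]
          have := hedge ((n - 1 : ℕ) : ZMod n)
          have hc : ((n - 1 : ℕ) : ZMod n) + 1 = 0 := by
            have h3 : ((n - 1 : ℕ) : ZMod n) + 1 = ((n - 1 + 1 : ℕ) : ZMod n) := by
              push_cast; ring
            rw [h3]
            have : (n - 1 + 1 : ℕ) = n := by omega
            rw [this, ZMod.natCast_self]
          rwa [hc] at this

/-- If a tournament contains a directed cycle of length k + (k-2)r (k ≥ 3, r ≥ 0),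
then it contains a directed cycle of length exactly k. -/
theorem stmt4 {V : Type*} (E : V → V → Prop)
    (htour : (∀ v, ¬ E v v) ∧ ∀ u v : V, u ≠ v → (E u v ↔ ¬ E v u))
    (k r : ℕ) (hk : 3 ≤ k)
    (hcyc : ∃ c : ZMod (k + (k - 2) * r) → V,
      Function.Injective c ∧ ∀ i, E (c i) (c (i + 1))) :
    ∃ c : ZMod k → V, Function.Injective c ∧ ∀ i : ZMod k, E (c i) (c (i + 1)) := by
  induction r with
  | zero => simpa using hcyc
  | succ r ih =>
    have hstep := stmt4_step E htour (k + (k - 2) * (r + 1)) (k + (k - 2) * r) k hk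
      (by omega) (by ring) hcyc
    rcases hstep with h | h
    · exact ih h
    · exact h
end

section
/- Let G be a directed graph on n vertices and k a positive integer with 2k ≤ n. Suppose that (1) for every nonempty set A of at most k vertices, A has at least one out-neighbor outside A and at least one in-neighbor outside A, and (2) for every two disjoint vertex sets A, B each of size at least k, there is at least one edge from A to B and at least one edge from B to A. Then G is strongly connected. -/
/-- Expansion properties imply strong connectivity of a directed graph. -/
theorem stmt6 {V : Type*} [Fintype V] [DecidableEq V] (E : V → V → Prop)
    (k : ℕ) (hk : 0 < k) (hkn : 2 * k ≤ Fintype.card V)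
    (h1 : ∀ A : Finset V, A.Nonempty → A.card ≤ k →
      (∃ u ∉ A, ∃ v ∈ A, E v u) ∧ (∃ u ∉ A, ∃ v ∈ A, E u v))
    (h2 : ∀ A B : Finset V, Disjoint A B → k ≤ A.card → k ≤ B.card →
      (∃ a ∈ A, ∃ b ∈ B, E a b) ∧ (∃ b ∈ B, ∃ a ∈ A, E b a)) :
    ∀ u v : V, Relation.ReflTransGen E u v := by
  classical
  intro u v
  set S : Finset V := Finset.univ.filter (fun x => Relation.ReflTransGen E u x) with hS
  set T : Finset V := Finset.univ.filter (fun x => Relation.ReflTransGen E x v) with hT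
  have hmemS : ∀ x, x ∈ S ↔ Relation.ReflTransGen E u x := by
    intro x; simp [hS]
  have hmemT : ∀ x, x ∈ T ↔ Relation.ReflTransGen E x v := by
    intro x; simp [hT]
  have hSne : S.Nonempty := ⟨u, (hmemS u).mpr Relation.ReflTransGen.refl⟩
  have hTne : T.Nonempty := ⟨v, (hmemT v).mpr Relation.ReflTransGen.refl⟩
  have hSk : k ≤ S.card := by
    by_contra h
    push_neg at h
    obtain ⟨⟨a, ha, b, hb, hab⟩, -⟩ := h1 S hSne (le_of_lt h)
    exact ha ((hmemS a).mpr (((hmemS b).mp hb).tail hab))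
  have hTk : k ≤ T.card := by
    by_contra h
    push_neg at h
    obtain ⟨-, ⟨a, ha, b, hb, hab⟩⟩ := h1 T hTne (le_of_lt h)
    exact ha ((hmemT a).mpr (Relation.ReflTransGen.head hab ((hmemT b).mp hb)))
  by_cases hd : Disjoint S T
  · obtain ⟨⟨a, ha, b, hb, hab⟩, -⟩ := h2 S T hd hSk hTk
    exact (((hmemS a).mp ha).tail hab).trans ((hmemT b).mp hb)
  · obtain ⟨w, hwS, hwT⟩ := Finset.not_disjoint_iff.mp hd
    exact ((hmemS w).mp hwS).trans ((hmemT w).mp hwT)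
end

section
/- Let T be a tournament, C = u₁, u₂, ..., u_r, u₁ a directed cycle in T, and v a vertex not on C. If there exist indices i and j such that (u_i, v) and (v, u_j) are both edges of T, then there exists an index k (indices taken cyclically) such that (u_k, v) and (v, u_{k+1}) are both edges of T; consequently T contains a directed cycle of length r+1 through all vertices of C and v. -/
/-- If a vertex v off a directed cycle C = u₁,…,u_r of a tournament has both an
in-edge from C and an out-edge to C, then there are consecutive cycle vertices
u_k, u_{k+1} with (u_k, v) and (v, u_{k+1}) edges, and hence a directed cycle of
length r+1 through all of C and v. -/
theorem stmt8 {V : Type*} (E : V → V → Prop)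
    (htour : (∀ v, ¬ E v v) ∧ ∀ u v : V, u ≠ v → (E u v ↔ ¬ E v u))
    (r : ℕ) (hr : 1 ≤ r)
    (c : ZMod r → V) (hinj : Function.Injective c)
    (hedges : ∀ i : ZMod r, E (c i) (c (i + 1)))
    (v : V) (hv : v ∉ Set.range c)
    (hboth : ∃ i j : ZMod r, E (c i) v ∧ E v (c j)) :
    (∃ k : ZMod r, E (c k) v ∧ E v (c (k + 1))) ∧
      ∃ c' : ZMod (r + 1) → V, Function.Injective c' ∧
        (∀ i : ZMod (r + 1), E (c' i) (c' (i + 1))) ∧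
        Set.range c' = Set.range c ∪ {v} := by
  haveI : NeZero r := ⟨by omega⟩
  haveI : Fact (1 < r + 1) := ⟨by omega⟩
  have hvne : ∀ m : ZMod r, v ≠ c m := by
    intro m heq; exact hv ⟨m, heq.symm⟩
  have hbeat : ∀ m : ZMod r, ¬ E v (c m) → E (c m) v := by
    intro m hm
    have h2 := (htour.2 v (c m) (hvne m))
    by_contra h3
    exact hm (h2.mpr h3)
  have hk : ∃ k : ZMod r, E (c k) v ∧ E v (c (k + 1)) := by
    by_contra h
    push_neg at h
    obtain ⟨i, j, hiv, hvj⟩ := hboth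
    have hstep : ∀ n : ℕ, E (c (i + n)) v := by
      intro n
      induction n with
      | zero => simpa using hiv
      | succ n ih =>
        have h1 := h _ ih
        have h2 := hbeat _ h1
        rw [show ((n + 1 : ℕ) : ZMod r) = (n : ZMod r) + 1 by push_cast; ring, ← add_assoc]
        exact h2
    have hval : (((j - i).val : ℕ) : ZMod r) = j - i := by
      rw [ZMod.natCast_val, ZMod.cast_id]
    have := hstep (j - i).val
    rw [hval] at this
    simp only [add_sub_cancel] at this
    exact (htour.2 (c j) v (Ne.symm (hvne j))).mp this hvj
  obtain ⟨k, hkv, hvk⟩ := hk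
  refine ⟨⟨k, hkv, hvk⟩, ?_⟩
  set f : ZMod (r + 1) → V := fun m => if m.val < r then c (k + 1 + (m.val : ZMod r)) else v with hf
  have hone : (1 : ZMod (r + 1)).val = 1 := ZMod.val_one _
  have hvallt : ∀ m : ZMod (r + 1), m.val < r + 1 := fun m => ZMod.val_lt m
  have hcastval : ∀ a : ZMod r, ((a.val : ℕ) : ZMod r) = a := by
    intro a; rw [ZMod.natCast_val, ZMod.cast_id]
  refine ⟨f, ?_, ?_, ?_⟩
  · -- injectivity
    intro a b hab
    simp only [hf] at hab
    by_cases ha : a.val < r <;> by_cases hb : b.val < r <;> simp [ha, hb] at hab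
    · have := hinj hab
      have h3 : ((a.val : ℕ) : ZMod r) = ((b.val : ℕ) : ZMod r) := by
        have := add_left_cancel this; exact this
      rw [ZMod.natCast_eq_natCast_iff] at h3
      have h4 : a.val = b.val := by
        have := Nat.ModEq.eq_of_lt_of_lt h3 ha hb
        exact this
      exact ZMod.val_injective _ h4
    · exact absurd hab.symm (hvne _)
    · exact absurd hab (hvne _)
    · have : a.val = r := by have := hvallt a; omega
      have hb' : b.val = r := by have := hvallt b; omega
      exact ZMod.val_injective _ (by omega)
  · -- edges
    intro i
    by_cases hi : i.val < r
    · have hi1 : (i + 1).val = i.val + 1 := by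
        rw [ZMod.val_add, hone, Nat.mod_eq_of_lt (by omega)]
      by_cases hi2 : i.val + 1 < r
      · simp only [hf, hi, hi1, hi2, if_true]
        have : ((i.val + 1 : ℕ) : ZMod r) = (i.val : ZMod r) + 1 := by push_cast; ring
        rw [this, ← add_assoc]
        exact hedges _
      · -- i.val + 1 = r
        have hieq : i.val + 1 = r := by omega
        simp only [hf, hi, hi1, if_true]
        rw [if_neg (by omega)]
        have : k + 1 + ((i.val : ℕ) : ZMod r) = k := by
          have : ((i.val : ℕ) : ZMod r) = (r : ZMod r) - 1 := by
            have : (i.val : ℕ) = r - 1 := by omega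
            rw [this]
            push_cast [Nat.cast_sub hr]
            ring
          rw [this, ZMod.natCast_self]
          ring
        rw [this]
        exact hkv
    · have hieq : i.val = r := by have := hvallt i; omega
      have hi1 : (i + 1).val = 0 := by
        rw [ZMod.val_add, hone, hieq]
        simp
      simp only [hf, hi, hi1, if_false]
      rw [if_pos (by omega)]
      simp only [Nat.cast_zero, add_zero]
      exact hvk
  · -- range
    ext x
    simp only [Set.mem_range, Set.mem_union, Set.mem_singleton_iff]
    constructor
    · rintro ⟨m, rfl⟩
      by_cases hm : m.val < r
      · exact Or.inl ⟨k + 1 + ((m.val : ℕ) : ZMod r), by simp [hf, hm]⟩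
      · right; simp [hf, hm]
    · rintro (⟨m, rfl⟩ | rfl)
      · refine ⟨(((m - (k + 1)).val : ℕ) : ZMod (r + 1)), ?_⟩
        have ht : (m - (k + 1)).val < r := ZMod.val_lt _
        have hvv : ((((m - (k + 1)).val : ℕ) : ZMod (r + 1))).val = (m - (k + 1)).val := by
          rw [ZMod.val_natCast, Nat.mod_eq_of_lt (by omega)]
        simp only [hf, hvv]
        rw [if_pos (by omega), hcastval]
        congr 1
        ring
      · refine ⟨((r : ℕ) : ZMod (r + 1)), ?_⟩
        have : (((r : ℕ) : ZMod (r + 1))).val = r := by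
          rw [ZMod.val_natCast, Nat.mod_eq_of_lt (by omega)]
        simp [hf, this]
end

section
/- Let D be an acyclic oriented graph whose vertex set V has n vertices (D is a partial orientation of K_n: some pairs may have no edge, but no pair has both edges). Let P = u₁, ..., u_r be a directed path in D of maximum length, with r < n, and let v be a vertex not on P. Then there exists an index k with 1 ≤ k ≤ r such that there is no edge between v and u_k in D in either direction, and adding the edge (u_k, v) to D creates a directed path on r + 1 vertices. -/
section AuxStmt12

variable {V : Type*}

/-- Insert vertex `v` into the path `p` at position `j`. -/
private def insVert {r : ℕ} (p : Fin r → V) (v : V) (j : ℕ) (hj : j ≤ r)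
    (i : Fin (r + 1)) : V :=
  if h1 : i.val < j then p ⟨i.val, lt_of_lt_of_le h1 hj⟩
  else if h2 : i.val = j then v
  else p ⟨i.val - 1, by have := i.isLt; omega⟩

private lemma insVert_lt {r : ℕ} (p : Fin r → V) (v : V) (j : ℕ) (hj : j ≤ r)
    (i : Fin (r + 1)) (h : i.val < j) :
    insVert p v j hj i = p ⟨i.val, lt_of_lt_of_le h hj⟩ := by
  rw [insVert, dif_pos h]

private lemma insVert_eq {r : ℕ} (p : Fin r → V) (v : V) (j : ℕ) (hj : j ≤ r)
    (i : Fin (r + 1)) (h : i.val = j) :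
    insVert p v j hj i = v := by
  rw [insVert, dif_neg (by omega), dif_pos h]

private lemma insVert_gt {r : ℕ} (p : Fin r → V) (v : V) (j : ℕ) (hj : j ≤ r)
    (i : Fin (r + 1)) (h : j < i.val) :
    insVert p v j hj i = p ⟨i.val - 1, by have := i.isLt; omega⟩ := by
  rw [insVert, dif_neg (by omega), dif_neg (by omega)]

private lemma insVert_inj {r : ℕ} (p : Fin r → V) (hinjp : Function.Injective p)
    (v : V) (hv : ∀ i : Fin r, v ≠ p i) (j : ℕ) (hj : j ≤ r) :
    Function.Injective (insVert p v j hj) := by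
  intro a b hab
  have ha' := a.isLt
  have hb' := b.isLt
  rcases lt_trichotomy a.val j with ha | ha | ha <;>
    rcases lt_trichotomy b.val j with hb | hb | hb
  · rw [insVert_lt p v j hj a ha, insVert_lt p v j hj b hb] at hab
    exact Fin.ext (Fin.mk_eq_mk.mp (hinjp hab))
  · rw [insVert_lt p v j hj a ha, insVert_eq p v j hj b hb] at hab
    exact (hv _ hab.symm).elim
  · rw [insVert_lt p v j hj a ha, insVert_gt p v j hj b hb] at hab
    have := Fin.mk_eq_mk.mp (hinjp hab)
    omega
  · rw [insVert_eq p v j hj a ha, insVert_lt p v j hj b hb] at hab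
    exact (hv _ hab).elim
  · exact Fin.ext (by omega)
  · rw [insVert_eq p v j hj a ha, insVert_gt p v j hj b hb] at hab
    exact (hv _ hab).elim
  · rw [insVert_gt p v j hj a ha, insVert_lt p v j hj b hb] at hab
    have := Fin.mk_eq_mk.mp (hinjp hab)
    omega
  · rw [insVert_gt p v j hj a ha, insVert_eq p v j hj b hb] at hab
    exact (hv _ hab.symm).elim
  · rw [insVert_gt p v j hj a ha, insVert_gt p v j hj b hb] at hab
    have := Fin.mk_eq_mk.mp (hinjp hab)
    exact Fin.ext (by omega)

private lemma insVert_path {r : ℕ} (E : V → V → Prop) (p : Fin r → V) (v : V)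
    (j : ℕ) (hj : j ≤ r)
    (hpath : ∀ i : ℕ, (h : i + 1 < r) → E (p ⟨i, by omega⟩) (p ⟨i + 1, h⟩))
    (hin : ∀ h : 1 ≤ j, E (p ⟨j - 1, by omega⟩) v)
    (hout : ∀ h : j < r, E v (p ⟨j, h⟩)) :
    ∀ i : ℕ, (h : i + 1 < r + 1) →
      E (insVert p v j hj ⟨i, by omega⟩) (insVert p v j hj ⟨i + 1, h⟩) := by
  intro i h
  rcases lt_trichotomy (i + 1) j with h1 | h1 | h1
  · rw [insVert_lt p v j hj _ (show i < j by omega), insVert_lt p v j hj _ (show i + 1 < j from h1)]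
    exact hpath i (by omega)
  · subst h1
    rw [insVert_lt p v _ hj _ (show i < i + 1 by omega), insVert_eq p v _ hj _ rfl]
    exact hin (by omega)
  · rcases eq_or_lt_of_le (show j ≤ i by omega) with h2 | h2
    · subst h2
      rw [insVert_eq p v j hj _ rfl, insVert_gt p v j hj _ (show j < j + 1 by omega)]
      exact hout (by omega)
    · rw [insVert_gt p v j hj _ (show j < i by omega),
        insVert_gt p v j hj _ (show j < i + 1 by omega)]
      have := hpath (i - 1) (by omega)
      simp only [show i - 1 + 1 = i from by omega] at this
      exact this

private lemma insVert_goal {r : ℕ} (E : V → V → Prop) (p : Fin r → V) (v : V)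
    (j : ℕ) (hj1 : 1 ≤ j) (hj : j ≤ r)
    (hpath : ∀ i : ℕ, (h : i + 1 < r) → E (p ⟨i, by omega⟩) (p ⟨i + 1, h⟩))
    (hout : ∀ h : j < r, E v (p ⟨j, h⟩)) :
    ∀ i : ℕ, (h : i + 1 < r + 1) →
      (E (insVert p v j hj ⟨i, by omega⟩) (insVert p v j hj ⟨i + 1, h⟩) ∨
        (insVert p v j hj ⟨i, by omega⟩ = p ⟨j - 1, by omega⟩ ∧
          insVert p v j hj ⟨i + 1, h⟩ = v)) := by
  intro i h
  rcases lt_trichotomy (i + 1) j with h1 | h1 | h1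
  · left
    rw [insVert_lt p v j hj _ (show i < j by omega), insVert_lt p v j hj _ (show i + 1 < j from h1)]
    exact hpath i (by omega)
  · right
    subst h1
    refine ⟨?_, insVert_eq p v _ hj _ rfl⟩
    rw [insVert_lt p v _ hj _ (show i < i + 1 by omega)]
    exact congrArg p (Fin.ext rfl)
  · left
    rcases eq_or_lt_of_le (show j ≤ i by omega) with h2 | h2
    · subst h2
      rw [insVert_eq p v j hj _ rfl, insVert_gt p v j hj _ (show j < j + 1 by omega)]
      exact hout (by omega)
    · rw [insVert_gt p v j hj _ (show j < i by omega),
        insVert_gt p v j hj _ (show j < i + 1 by omega)]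
      have := hpath (i - 1) (by omega)
      simp only [show i - 1 + 1 = i from by omega] at this
      exact this

end AuxStmt12

/-- In an acyclic oriented graph, a maximum directed path missing some vertex v can
be extended: there is a path vertex u_k joined to v in neither direction such that
adding the edge (u_k, v) creates a directed path on r + 1 vertices. -/
theorem stmt12 {V : Type*} [Fintype V] (E : V → V → Prop)
    (horient : (∀ v, ¬ E v v) ∧ ∀ u v : V, E u v → ¬ E v u)
    (hacyc : ¬ ∃ m : ℕ, 1 ≤ m ∧ ∃ c : ZMod m → V,
      Function.Injective c ∧ ∀ i : ZMod m, E (c i) (c (i + 1)))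
    (r : ℕ) (p : Fin r → V) (hinjp : Function.Injective p)
    (hpath : ∀ i : ℕ, (h : i + 1 < r) → E (p ⟨i, by omega⟩) (p ⟨i + 1, h⟩))
    (hmax : ∀ s : ℕ, ∀ q : Fin s → V, Function.Injective q →
      (∀ i : ℕ, (h : i + 1 < s) → E (q ⟨i, by omega⟩) (q ⟨i + 1, h⟩)) → s ≤ r)
    (hr : r < Fintype.card V) (v : V) (hv : v ∉ Set.range p) :
    ∃ k : Fin r, (¬ E v (p k) ∧ ¬ E (p k) v) ∧
      ∃ q : Fin (r + 1) → V, Function.Injective q ∧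
        ∀ i : ℕ, (h : i + 1 < r + 1) →
          (E (q ⟨i, by omega⟩) (q ⟨i + 1, h⟩) ∨
            (q ⟨i, by omega⟩ = p k ∧ q ⟨i + 1, h⟩ = v)) := by
  classical
  have hv' : ∀ i : Fin r, v ≠ p i := fun i hvi => hv ⟨i, hvi.symm⟩
  have hr1 : 1 ≤ r := hmax 1 (fun _ => v) (fun a b _ => Subsingleton.elim a b)
    (fun i h => absurd h (by omega))
  have hfront : ∀ h : 0 < r, ¬ E v (p ⟨0, h⟩) := by
    intro h0 hE
    have := hmax (r + 1) (insVert p v 0 (by omega))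
      (insVert_inj p hinjp v hv' 0 (by omega))
      (insVert_path E p v 0 (by omega) hpath (fun h1 => absurd h1 (by omega)) (fun _ => hE))
    omega
  by_cases hex : ∃ n : ℕ, ∃ h : n < r, E v (p ⟨n, h⟩)
  · obtain ⟨hjr, hEj⟩ := Nat.find_spec hex
    set j := Nat.find hex with hjdef
    have hmin : ∀ m, m < j → ¬ ∃ h : m < r, E v (p ⟨m, h⟩) := fun m hm => Nat.find_min hex hm
    have hj1 : 1 ≤ j := by
      rcases Nat.eq_zero_or_pos j with h0 | h0
      · exact absurd (show E v (p ⟨0, by omega⟩) from by simp only [← h0]; exact hEj)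
          (hfront (by omega))
      · exact h0
    refine ⟨⟨j - 1, by omega⟩, ⟨?_, ?_⟩, insVert p v j (by omega),
      insVert_inj p hinjp v hv' j (by omega), ?_⟩
    · intro hE
      exact hmin (j - 1) (by omega) ⟨by omega, hE⟩
    · intro hE
      have := hmax (r + 1) (insVert p v j (by omega))
        (insVert_inj p hinjp v hv' j (by omega))
        (insVert_path E p v j (by omega) hpath (fun _ => hE) (fun _ => hEj))
      omega
    · exact insVert_goal E p v j hj1 (by omega) hpath (fun _ => hEj)
  · push_neg at hex
    refine ⟨⟨r - 1, by omega⟩, ⟨hex (r - 1) (by omega), ?_⟩, insVert p v r le_rfl,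
      insVert_inj p hinjp v hv' r le_rfl, ?_⟩
    · intro hE
      have := hmax (r + 1) (insVert p v r le_rfl)
        (insVert_inj p hinjp v hv' r le_rfl)
        (insVert_path E p v r le_rfl hpath (fun _ => hE) (fun h1 => absurd h1 (by omega)))
      omega
    · exact insVert_goal E p v r hr1 le_rfl hpath (fun h1 => absurd h1 (by omega))
end

section
/- Let T be a strongly connected tournament on n vertices. Then every directed cycle of maximum length in T passes through every vertex of T. -/
/-- Inserting a vertex into the cycle yields a longer cycle: contradiction. -/
lemma mixedFalse {V : Type*} (E : V → V → Prop) {m : ℕ} (hm : 1 ≤ m)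
    (c : ZMod m → V) (hinj : Function.Injective c)
    (hedges : ∀ i : ZMod m, E (c i) (c (i + 1)))
    (hmax : ∀ m' : ℕ, ∀ c' : ZMod m' → V, Function.Injective c' →
      (∀ i : ZMod m', E (c' i) (c' (i + 1))) → m' ≤ m)
    (x : V) (hx : x ∉ Set.range c) (i0 : ZMod m)
    (h1 : E (c i0) x) (h2 : E x (c (i0 + 1))) : False := by
  haveI : NeZero m := ⟨by omega⟩
  haveI : Fact (1 < m + 1) := ⟨by omega⟩
  set c' : ZMod (m + 1) → V :=
    fun j => if j.val < m then c (i0 + 1 + (j.val : ZMod m)) else x with hc'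
  have hval : ∀ j : ZMod (m + 1), j.val < m + 1 := fun j => ZMod.val_lt j
  have hsucc : ∀ j : ZMod (m + 1), (j + 1).val = (j.val + 1) % (m + 1) := by
    intro j; rw [ZMod.val_add, ZMod.val_one]
  have hinj' : Function.Injective c' := by
    intro j k hjk
    simp only [hc'] at hjk
    split_ifs at hjk with hj hk hk
    · have h := hinj hjk
      have h2 : ((j.val : ZMod m)) = (k.val : ZMod m) := by
        have := add_left_cancel h; exact this
      have : j.val = k.val := by
        have e1 := ZMod.val_cast_of_lt hj
        have e2 := ZMod.val_cast_of_lt hk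
        rw [← e1, ← e2, h2]
      exact ZMod.val_injective _ this
    · exact absurd ⟨_, hjk⟩ hx
    · exact absurd ⟨_, hjk.symm⟩ hx
    · have : j.val = k.val := by have := hval j; have := hval k; omega
      exact ZMod.val_injective _ this
  have hedges' : ∀ j : ZMod (m + 1), E (c' j) (c' (j + 1)) := by
    intro j
    rcases lt_trichotomy (j.val + 1) m with h | h | h
    · have hj : j.val < m := by omega
      have hk : (j + 1).val = j.val + 1 := by rw [hsucc, Nat.mod_eq_of_lt (by omega)]
      simp only [hc', hj, if_pos, hk, if_pos h]
      have : ((j.val + 1 : ℕ) : ZMod m) = (j.val : ZMod m) + 1 := by push_cast; ring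
      rw [this, ← add_assoc]
      exact hedges _
    · -- j.val = m - 1, next is x
      have hj : j.val < m := by omega
      have hk : (j + 1).val = m := by
        rw [hsucc, Nat.mod_eq_of_lt (by omega)]; omega
      simp only [hc', hj, if_pos, hk]
      rw [if_neg (by omega)]
      have : i0 + 1 + ((j.val : ℕ) : ZMod m) = i0 := by
        have : ((j.val : ℕ) : ZMod m) = (m : ZMod m) - 1 := by
          have : (j.val : ℕ) = m - 1 := by omega
          rw [this]
          have : ((m - 1 : ℕ) : ZMod m) + 1 = ((m - 1 + 1 : ℕ) : ZMod m) := by push_cast; ring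
          have hmm : m - 1 + 1 = m := by omega
          rw [hmm] at this
          rw [ZMod.natCast_self] at this ⊢
          linear_combination this
        rw [this, ZMod.natCast_self]; ring
      rw [this]; exact h1
    · -- j.val = m, j is x, next is c (i0+1)
      have hj : j.val = m := by have := hval j; omega
      have hk : (j + 1).val = 0 := by
        rw [hsucc]
        have e : j.val + 1 = m + 1 := by omega
        rw [e, Nat.mod_self]
      simp only [hc', hj, hk]
      rw [if_neg (by omega), if_pos (by omega)]
      simpa using h2
  have := hmax (m + 1) c' hinj' hedges'
  omega

/-- A vertex pair a (dominated by C) → b (dominating C) extends the cycle by two. -/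
lemma pairFalse {V : Type*} (E : V → V → Prop) (hirr : ∀ v, ¬ E v v) {m : ℕ} (hm : 1 ≤ m)
    (c : ZMod m → V) (hinj : Function.Injective c)
    (hedges : ∀ i : ZMod m, E (c i) (c (i + 1)))
    (hmax : ∀ m' : ℕ, ∀ c' : ZMod m' → V, Function.Injective c' →
      (∀ i : ZMod m', E (c' i) (c' (i + 1))) → m' ≤ m)
    (a b : V) (ha' : a ∉ Set.range c) (hb' : b ∉ Set.range c)
    (ha : ∀ i, E (c i) a) (hb : ∀ i, E b (c i)) (hab : E a b) : False := by
  haveI : NeZero m := ⟨by omega⟩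
  haveI : Fact (1 < m + 2) := ⟨by omega⟩
  have hne : a ≠ b := by rintro rfl; exact hirr a hab
  set c' : ZMod (m + 2) → V :=
    fun j => if j.val < m then c ((j.val : ZMod m)) else if j.val = m then a else b with hc'
  have hval : ∀ j : ZMod (m + 2), j.val < m + 2 := fun j => ZMod.val_lt j
  have hsucc : ∀ j : ZMod (m + 2), (j + 1).val = (j.val + 1) % (m + 2) := by
    intro j; rw [ZMod.val_add, ZMod.val_one]
  have hinj' : Function.Injective c' := by
    intro j k hjk
    have hvj := hval j; have hvk := hval k
    simp only [hc'] at hjk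
    by_cases hj : j.val < m <;> by_cases hk : k.val < m
    · rw [if_pos hj, if_pos hk] at hjk
      have h := hinj hjk
      have : j.val = k.val := by
        rw [← ZMod.val_cast_of_lt hj, ← ZMod.val_cast_of_lt hk, h]
      exact ZMod.val_injective _ this
    · rw [if_pos hj, if_neg hk] at hjk
      by_cases hk2 : k.val = m
      · rw [if_pos hk2] at hjk; exact absurd ⟨_, hjk⟩ ha'
      · rw [if_neg hk2] at hjk; exact absurd ⟨_, hjk⟩ hb'
    · rw [if_neg hj, if_pos hk] at hjk
      by_cases hj2 : j.val = m
      · rw [if_pos hj2] at hjk; exact absurd ⟨_, hjk.symm⟩ ha'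
      · rw [if_neg hj2] at hjk; exact absurd ⟨_, hjk.symm⟩ hb'
    · rw [if_neg hj, if_neg hk] at hjk
      by_cases hj2 : j.val = m <;> by_cases hk2 : k.val = m
      · exact ZMod.val_injective _ (by omega)
      · rw [if_pos hj2, if_neg hk2] at hjk; exact absurd hjk hne
      · rw [if_neg hj2, if_pos hk2] at hjk; exact absurd hjk.symm hne
      · exact ZMod.val_injective _ (by omega)
  have cval : ∀ j : ZMod (m + 2), j.val < m → c' j = c ((j.val : ℕ) : ZMod m) := by
    intro j h; simp only [hc']; rw [if_pos h]
  have cA : ∀ j : ZMod (m + 2), j.val = m → c' j = a := by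
    intro j h; simp only [hc']; rw [if_neg (by omega), if_pos h]
  have cB : ∀ j : ZMod (m + 2), j.val = m + 1 → c' j = b := by
    intro j h; simp only [hc']; rw [if_neg (by omega), if_neg (by omega)]
  have hedges' : ∀ j : ZMod (m + 2), E (c' j) (c' (j + 1)) := by
    intro j
    rcases lt_trichotomy (j.val + 1) m with h | h | h
    · have hj : j.val < m := by omega
      have hk : (j + 1).val = j.val + 1 := by rw [hsucc, Nat.mod_eq_of_lt (by omega)]
      rw [cval j hj, cval (j + 1) (by omega), hk]
      have e : ((j.val + 1 : ℕ) : ZMod m) = ((j.val : ℕ) : ZMod m) + 1 := by push_cast; ring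
      rw [e]
      exact hedges _
    · have hj : j.val < m := by omega
      have hk : (j + 1).val = m := by
        rw [hsucc, Nat.mod_eq_of_lt (by omega)]; omega
      rw [cval j hj, cA (j + 1) hk]
      exact ha _
    · rcases Nat.lt_or_ge j.val (m + 1) with hj | hj
      · have hj' : j.val = m := by omega
        have hk : (j + 1).val = m + 1 := by rw [hsucc, Nat.mod_eq_of_lt (by omega)]; omega
        rw [cA j hj', cB (j + 1) hk]
        exact hab
      · have hj' : j.val = m + 1 := by have := hval j; omega
        have hk : (j + 1).val = 0 := by
          rw [hsucc]
          have e : j.val + 1 = m + 2 := by omega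
          rw [e, Nat.mod_self]
        rw [cB j hj', cval (j + 1) (by omega)]
        exact hb _
  have := hmax (m + 2) c' hinj' hedges'
  omega

/-- In a strongly connected tournament, a directed cycle of maximum length passes
through every vertex. -/
theorem stmt17 {V : Type*} [Fintype V] (E : V → V → Prop)
    (htour : (∀ v, ¬ E v v) ∧ ∀ u v : V, u ≠ v → (E u v ↔ ¬ E v u))
    (hstrong : ∀ u v : V, Relation.ReflTransGen E u v)
    (m : ℕ) (hm : 1 ≤ m) (c : ZMod m → V) (hinj : Function.Injective c)
    (hedges : ∀ i : ZMod m, E (c i) (c (i + 1)))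
    (hmax : ∀ m' : ℕ, ∀ c' : ZMod m' → V, Function.Injective c' →
      (∀ i : ZMod m', E (c' i) (c' (i + 1))) → m' ≤ m) :
    ∀ v : V, v ∈ Set.range c := by
  haveI : NeZero m := ⟨by omega⟩
  intro v
  by_contra hv
  -- tournament helper: for x off the cycle, ¬ E x (c i) → E (c i) x and vice versa
  have hT : ∀ x, x ∉ Set.range c → ∀ i : ZMod m, ¬ E x (c i) → E (c i) x := by
    intro x hx i hnot
    exact (htour.2 (c i) x (fun h => hx ⟨i, h⟩)).mpr hnot
  have hT' : ∀ x, x ∉ Set.range c → ∀ i : ZMod m, ¬ E (c i) x → E x (c i) := by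
    intro x hx i hnot
    by_contra hnn
    exact hnot (hT x hx i hnn)
  -- dichotomy
  have hdich : ∀ x, x ∉ Set.range c → (∀ i, E (c i) x) ∨ (∀ i, E x (c i)) := by
    intro x hx
    by_cases hall : ∀ i, E (c i) x
    · exact Or.inl hall
    · push_neg at hall
      obtain ⟨j, hj⟩ := hall
      right
      by_contra hcon
      push_neg at hcon
      obtain ⟨i0, hi0⟩ := hcon
      have hi0' : E (c i0) x := hT x hx i0 hi0
      -- propagate: E (c (i0 + k)) x for all k
      have hprop : ∀ k : ℕ, E (c (i0 + (k : ZMod m))) x := by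
        intro k
        induction k with
        | zero => simpa using hi0'
        | succ n ih =>
          by_cases hnext : E x (c (i0 + (n : ZMod m) + 1))
          · exact absurd (mixedFalse E hm c hinj hedges hmax x hx _ ih hnext) id
          · have := hT x hx _ hnext
            have e : i0 + ((n + 1 : ℕ) : ZMod m) = i0 + (n : ZMod m) + 1 := by
              push_cast; ring
            rw [e]; exact this
      have hEj : E (c j) x := by
        have hp := hprop ((j - i0).val)
        have e : i0 + (((j - i0).val : ℕ) : ZMod m) = j := by
          rw [ZMod.natCast_val, ZMod.cast_id]; ring
        rwa [e] at hp
      exact hj hEj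
  -- From a vertex dominated by the whole cycle we derive a contradiction,
  -- following a path back to the cycle.
  have fromW : ∀ w : V, Relation.ReflTransGen E w (c 0) →
      w ∉ Set.range c → (∀ i, E (c i) w) → False := by
    intro w hpath
    induction hpath using Relation.ReflTransGen.head_induction_on with
    | refl => intro h _; exact h ⟨0, rfl⟩
    | @head x y hxy hyc ih =>
      intro hx hWx
      by_cases hy : y ∈ Set.range c
      · obtain ⟨j, hj⟩ := hy
        exact mixedFalse E hm c hinj hedges hmax x hx (j - 1) (hWx _)
          (by rw [sub_add_cancel, hj]; exact hxy)
      · rcases hdich y hy with hWy | hUy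
        · exact ih hy hWy
        · exact pairFalse E htour.1 hm c hinj hedges hmax x y hx hy hWx hUy hxy
  rcases hdich v hv with hWv | hUv
  · exact fromW v (hstrong v (c 0)) hv hWv
  · -- follow a path from the cycle to v; every vertex reached stays
    -- on the cycle or dominated by it
    have step : ∀ z : V, Relation.ReflTransGen E (c 0) z →
        z ∈ Set.range c ∨ (∀ i, E (c i) z) := by
      intro z hpath
      induction hpath with
      | refl => exact Or.inl ⟨0, rfl⟩
      | @tail x y hxz hxy ih =>
        by_cases hy : y ∈ Set.range c
        · exact Or.inl hy
        · rcases hdich y hy with hWy | hUy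
          · exact Or.inr hWy
          · rcases ih with ⟨j, hj⟩ | hWx
            · exact absurd (mixedFalse E hm c hinj hedges hmax y hy j
                (by rw [hj]; exact hxy) (hUy _)) not_false
            · have hx' : x ∉ Set.range c := by
                rintro ⟨j, hj⟩
                exact htour.1 x (by rw [← hj] at hWx ⊢; exact hWx j)
              exact absurd (pairFalse E htour.1 hm c hinj hedges hmax x y hx' hy
                hWx hUy hxy) not_false
    rcases step v (hstrong (c 0) v) with hmem | hWv
    · exact hv hmem
    · exact fromW v (hstrong v (c 0)) hv hWv
end
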